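/- For n = 1, the set Q₁ of Γ₀(6)-equivalence classes of positive definite integral binary quadratic forms ax² + bxy + cy² of discriminant −23 with 6 | a, a > 0 and b ≡ 1 (mod 12) has exactly 3 elements, represented by 6x² + xy + y², 12x² + 13xy + 4y², and 18x² + 25xy + 9y². -/

import Mathlib

/-- The action of a matrix `(p q; r s)` on a binary quadratic form `[a,b,c]` by linear
substitution of variables: `(Q∘γ)(x,y) = Q(px + qy, rx + sy)`. -/
def qfAct (γ : Matrix (Fin 2) (Fin 2) ℤ) (f : ℤ × ℤ × ℤ) : ℤ × ℤ × ℤ :=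
  ⟨f.1 * (γ 0 0) ^ 2 + f.2.1 * γ 0 0 * γ 1 0 + f.2.2 * (γ 1 0) ^ 2,
   2 * f.1 * γ 0 0 * γ 0 1 + f.2.1 * (γ 0 0 * γ 1 1 + γ 0 1 * γ 1 0) + 2 * f.2.2 * γ 1 0 * γ 1 1,
   f.1 * (γ 0 1) ^ 2 + f.2.1 * γ 0 1 * γ 1 1 + f.2.2 * (γ 1 1) ^ 2⟩

/-- `Γ₀(N)`-equivalence of integral binary quadratic forms `[a,b,c]`. -/
def Gamma0Equiv (N : ℕ) (f g : ℤ × ℤ × ℤ) : Prop :=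
  ∃ γ : Matrix.SpecialLinearGroup (Fin 2) ℤ,
    (N : ℤ) ∣ (γ : Matrix (Fin 2) (Fin 2) ℤ) 1 0 ∧ qfAct γ f = g

/-- Membership in the set `Q₁`: positive definite forms of discriminant `−23` with `6 ∣ a`,
`a > 0` and `b ≡ 1 (mod 12)`. -/
def InQ1 (f : ℤ × ℤ × ℤ) : Prop :=
  f.2.1 ^ 2 - 4 * f.1 * f.2.2 = -23 ∧ 0 < f.1 ∧ (6 : ℤ) ∣ f.1 ∧ f.2.1 ≡ 1 [ZMOD 12]


/-!
Every positive definite form of discriminant `-23` is `SL₂(ℤ)`-equivalent to a reduced one, and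
the only reduced ones are `x² + xy + 6y²` and `2x² ± xy + 3y²`; each of the three representatives
is equivalent to one of these. They are pairwise properly inequivalent: only the first represents
`1`, and a proper equivalence between the last two would have to fix `(1, 0)` up to sign, which
forces an even middle coefficient.

Conversely, for forms with `N ∣ a`, `b` prime to `N` and equal middle coefficients modulo `2N`,
every `SL₂(ℤ)`-equivalence `(p q; r s)` already lies in `Γ₀(N)`: the transformation rules for `a`
and `b` give `N ∣ r(bp + cr)` and `N ∣ r(bq + cs)`, and `s · r(bp + cr) - r · r(bq + cs) = br`.
-/

open scoped MatrixGroups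

def ProperlyEquiv (f g : ℤ × ℤ × ℤ) : Prop :=
  ∃ γ : SL(2, ℤ), qfAct γ f = g

def disc (f : ℤ × ℤ × ℤ) : ℤ :=
  f.2.1 ^ 2 - 4 * f.1 * f.2.2

/-- Gauss' reduction condition `|b| ≤ a ≤ c`, with `b = -a` excluded but without the boundary
requirement `0 ≤ b` when `a = c`. -/
def IsReducedForm (f : ℤ × ℤ × ℤ) : Prop :=
  -f.1 < f.2.1 ∧ f.2.1 ≤ f.1 ∧ f.1 ≤ f.2.2

theorem qfAct_mul (A B : Matrix (Fin 2) (Fin 2) ℤ) (f : ℤ × ℤ × ℤ) :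
    qfAct (A * B) f = qfAct B (qfAct A f) := by
  simp only [qfAct, Matrix.mul_apply, Fin.sum_univ_two]
  refine Prod.ext ?_ (Prod.ext ?_ ?_) <;> ring

theorem qfAct_one (f : ℤ × ℤ × ℤ) : qfAct 1 f = f := by
  simp [qfAct]

theorem disc_qfAct (γ : Matrix (Fin 2) (Fin 2) ℤ) (f : ℤ × ℤ × ℤ) :
    disc (qfAct γ f) = γ.det ^ 2 * disc f := by
  simp only [disc, qfAct, Matrix.det_fin_two]
  ring

theorem pos_of_disc_neg {a b c : ℤ} (ha : 0 < a) (hd : disc (a, b, c) < 0) : 0 < c := by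
  simp only [disc] at hd
  nlinarith [sq_nonneg b]

theorem exists_add_two_mul_mem_Ioc (a b : ℤ) (ha : 0 < a) :
    ∃ q, -a < b + 2 * a * q ∧ b + 2 * a * q ≤ a := by
  have hp : 0 < 2 * a := by positivity
  have hmem := toIocMod_mem_Ioc hp (-a) b
  rw [← self_sub_toIocDiv_zsmul, zsmul_eq_mul, Int.cast_id] at hmem
  exact ⟨-toIocDiv hp (-a) b, by linarith [hmem.1], by linarith [hmem.2]⟩

namespace ProperlyEquiv

theorem trans {f g h : ℤ × ℤ × ℤ} (hfg : ProperlyEquiv f g) (hgh : ProperlyEquiv g h) :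
    ProperlyEquiv f h := by
  obtain ⟨γ, rfl⟩ := hfg
  obtain ⟨δ, rfl⟩ := hgh
  exact ⟨γ * δ, by rw [Matrix.SpecialLinearGroup.coe_mul, qfAct_mul]⟩

theorem symm {f g : ℤ × ℤ × ℤ} (h : ProperlyEquiv f g) : ProperlyEquiv g f := by
  obtain ⟨γ, rfl⟩ := h
  refine ⟨γ⁻¹, ?_⟩
  rw [← qfAct_mul, ← Matrix.SpecialLinearGroup.coe_mul, mul_inv_cancel,
    Matrix.SpecialLinearGroup.coe_one, qfAct_one]

theorem disc_eq {f g : ℤ × ℤ × ℤ} (h : ProperlyEquiv f g) : disc g = disc f := by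
  obtain ⟨γ, rfl⟩ := h
  rw [disc_qfAct, γ.det_coe, one_pow, one_mul]

theorem translate (a b c q : ℤ) :
    ProperlyEquiv (a, b, c) (a, b + 2 * a * q, a * q ^ 2 + b * q + c) := by
  refine ⟨⟨!![1, q; 0, 1], by simp [Matrix.det_fin_two]⟩, ?_⟩
  simp [qfAct]
  ring

theorem swap (a b c : ℤ) : ProperlyEquiv (a, b, c) (c, -b, a) :=
  ⟨⟨!![0, -1; 1, 0], by decide⟩, by simp [qfAct]⟩

theorem exists_isReducedForm {f : ℤ × ℤ × ℤ} (ha : 0 < f.1) (hd : disc f < 0) :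
    ∃ g, ProperlyEquiv f g ∧ IsReducedForm g := by
  induction hn : f.1.toNat using Nat.strong_induction_on generalizing f with
  | _ n ih =>
  obtain ⟨a, b, c⟩ := f
  obtain ⟨q, hq⟩ := exists_add_two_mul_mem_Ioc a b ha
  have hfg := translate a b c q
  set c' := a * q ^ 2 + b * q + c
  by_cases hac : a ≤ c'
  · exact ⟨_, hfg, hq.1, hq.2, hac⟩
  · have hd' : disc (a, b + 2 * a * q, c') < 0 := hfg.disc_eq ▸ hd
    have hc' : 0 < c' := pos_of_disc_neg ha hd'
    have hswap := swap a (b + 2 * a * q) c'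
    obtain ⟨g, hg, hred⟩ :=
      ih c'.toNat (by dsimp only at ha hn; omega) hc' (hswap.disc_eq ▸ hd') rfl
    exact ⟨g, hfg.trans (hswap.trans hg), hred⟩

end ProperlyEquiv

theorem Gamma0Equiv.properlyEquiv {N : ℕ} {f g : ℤ × ℤ × ℤ} (h : Gamma0Equiv N f g) :
    ProperlyEquiv f g :=
  let ⟨γ, _, hγ⟩ := h
  ⟨γ, hγ⟩

theorem eq_of_isReducedForm_of_disc_eq_neg_23 {f : ℤ × ℤ × ℤ} (hf : IsReducedForm f)
    (hd : disc f = -23) : f = (1, 1, 6) ∨ f = (2, 1, 3) ∨ f = (2, -1, 3) := by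
  obtain ⟨a, b, c⟩ := f
  obtain ⟨hab, hba, hac⟩ := hf
  simp only [disc] at hd hab hba hac
  have ha₀ : 0 < a := by omega
  have ha : a ≤ 2 := by nlinarith
  interval_cases a <;> interval_cases b <;> simp <;> omega

theorem properlyEquiv_of_disc_eq_neg_23 {f : ℤ × ℤ × ℤ} (ha : 0 < f.1) (hd : disc f = -23) :
    ProperlyEquiv f (1, 1, 6) ∨ ProperlyEquiv f (2, 1, 3) ∨ ProperlyEquiv f (2, -1, 3) := by
  obtain ⟨g, hfg, hg⟩ := ProperlyEquiv.exists_isReducedForm ha (by rw [hd]; norm_num)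
  rcases eq_of_isReducedForm_of_disc_eq_neg_23 hg (hfg.disc_eq.trans hd) with rfl | rfl | rfl
  · exact Or.inl hfg
  · exact Or.inr (Or.inl hfg)
  · exact Or.inr (Or.inr hfg)

theorem not_properlyEquiv_two_three_one {b b' c' : ℤ} (hb : b ^ 2 = 1) :
    ¬ ProperlyEquiv (2, b, 3) (1, b', c') := by
  rintro ⟨γ, h⟩
  have e : 2 * γ 0 0 ^ 2 + b * γ 0 0 * γ 1 0 + 3 * γ 1 0 ^ 2 = 1 := congrArg Prod.fst h
  have hr : γ 1 0 * γ 1 0 < 1 := by nlinarith [sq_nonneg (4 * γ 0 0 + b * γ 1 0)]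
  have hr0 : γ 1 0 = 0 := by nlinarith [mul_self_nonneg (γ 1 0)]
  have : 2 * γ 0 0 ^ 2 = 1 := by simpa [hr0] using e
  omega

theorem not_properlyEquiv_two_one_three_two_neg_one_three :
    ¬ ProperlyEquiv (2, 1, 3) (2, -1, 3) := by
  rintro ⟨γ, h⟩
  have hdet : γ 0 0 * γ 1 1 - γ 0 1 * γ 1 0 = 1 := by rw [← Matrix.det_fin_two]; exact γ.det_coe
  have e₁ : 2 * γ 0 0 ^ 2 + 1 * γ 0 0 * γ 1 0 + 3 * γ 1 0 ^ 2 = 2 := congrArg Prod.fst h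
  have e₂ : 2 * 2 * γ 0 0 * γ 0 1 + 1 * (γ 0 0 * γ 1 1 + γ 0 1 * γ 1 0)
      + 2 * 3 * γ 1 0 * γ 1 1 = -1 := congrArg (·.2.1) h
  have hr : γ 1 0 * γ 1 0 < 1 := by nlinarith [sq_nonneg (4 * γ 0 0 + γ 1 0)]
  have hr0 : γ 1 0 = 0 := by nlinarith [mul_self_nonneg (γ 1 0)]
  have hps : γ 0 0 * γ 1 1 = 1 := by simpa [hr0] using hdet
  have : 4 * (γ 0 0 * γ 0 1) + γ 0 0 * γ 1 1 = -1 := by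
    simp only [hr0, mul_zero, zero_mul, add_zero] at e₂
    linear_combination e₂
  omega

theorem dvd_of_qfAct_eq {N a b c a' b' c' : ℤ} {γ : SL(2, ℤ)}
    (h : qfAct γ (a, b, c) = (a', b', c')) (ha : N ∣ a) (ha' : N ∣ a')
    (hb : b ≡ b' [ZMOD 2 * N]) (hbN : IsCoprime N b) : N ∣ γ 1 0 := by
  set p := γ 0 0
  set q := γ 0 1
  set r := γ 1 0
  set s := γ 1 1
  have hdet : p * s - q * r = 1 := by rw [← Matrix.det_fin_two]; exact γ.det_coe
  simp only [qfAct, Prod.mk.injEq] at h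
  obtain ⟨e₁, e₂, -⟩ := h
  have h₁ : N ∣ r * (b * p + c * r) := by
    have : r * (b * p + c * r) = a' - a * p ^ 2 := by linear_combination e₁
    rw [this]
    exact ha'.sub (ha.mul_right _)
  have h₂ : N ∣ r * (b * q + c * s) := by
    have : 2 * (r * (b * q + c * s)) = b' - b - 2 * a * p * q := by
      linear_combination e₂ - b * hdet
    rw [← mul_dvd_mul_iff_left (two_ne_zero' ℤ), this]
    have h2apq : 2 * N ∣ 2 * a * p * q := by
      simpa [mul_assoc] using mul_dvd_mul_left 2 (ha.mul_right (p * q))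
    exact hb.dvd.sub h2apq
  have : r * b = s * (r * (b * p + c * r)) - r * (r * (b * q + c * s)) := by
    linear_combination -b * r * hdet
  exact hbN.dvd_of_dvd_mul_right (this ▸ (h₁.mul_left s).sub (h₂.mul_left r))

theorem gamma0Equiv_of_properlyEquiv {f g : ℤ × ℤ × ℤ} (hf : InQ1 f) (hg : InQ1 g)
    (h : ProperlyEquiv f g) : Gamma0Equiv 6 f g := by
  obtain ⟨γ, rfl⟩ := h
  obtain ⟨-, -, ha, hb⟩ := hf
  obtain ⟨-, -, ha', hb'⟩ := hg
  obtain ⟨k, hk⟩ := (Int.ModEq.dvd hb.symm)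
  refine ⟨γ, ?_, rfl⟩
  exact dvd_of_qfAct_eq rfl ha ha' (hb.trans hb'.symm) ⟨-2 * k, 1, by linear_combination hk⟩

/-- `Q₁` has exactly 3 classes, represented by `6x² + xy + y²`, `12x² + 13xy + 4y²`,
`18x² + 25xy + 9y²`. -/
theorem Q1_has_three_classes :
    InQ1 (6, 1, 1) ∧ InQ1 (12, 13, 4) ∧ InQ1 (18, 25, 9) ∧
    ¬ Gamma0Equiv 6 (6, 1, 1) (12, 13, 4) ∧
    ¬ Gamma0Equiv 6 (6, 1, 1) (18, 25, 9) ∧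
    ¬ Gamma0Equiv 6 (12, 13, 4) (18, 25, 9) ∧
    (∀ f : ℤ × ℤ × ℤ, InQ1 f →
      Gamma0Equiv 6 f (6, 1, 1) ∨ Gamma0Equiv 6 f (12, 13, 4) ∨ Gamma0Equiv 6 f (18, 25, 9)) := by
  have q₁ : InQ1 (6, 1, 1) := by unfold InQ1; decide
  have q₂ : InQ1 (12, 13, 4) := by unfold InQ1; decide
  have q₃ : InQ1 (18, 25, 9) := by unfold InQ1; decide
  have h₁ : ProperlyEquiv (1, 1, 6) (6, 1, 1) := ⟨⟨!![-1, -1; 1, 0], by decide⟩, by decide⟩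
  have h₂ : ProperlyEquiv (2, 1, 3) (12, 13, 4) := ⟨⟨!![-1, -1; 2, 1], by decide⟩, by decide⟩
  have h₃ : ProperlyEquiv (2, -1, 3) (18, 25, 9) := ⟨⟨!![-3, -2; -1, -1], by decide⟩, by decide⟩
  refine ⟨q₁, q₂, q₃, fun h => ?_, fun h => ?_, fun h => ?_, fun f hf => ?_⟩
  · exact not_properlyEquiv_two_three_one (by norm_num)
      ((h₂.trans h.properlyEquiv.symm).trans h₁.symm)
  · exact not_properlyEquiv_two_three_one (by norm_num)
      ((h₃.trans h.properlyEquiv.symm).trans h₁.symm)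
  · exact not_properlyEquiv_two_one_three_two_neg_one_three
      ((h₂.trans h.properlyEquiv).trans h₃.symm)
  · rcases properlyEquiv_of_disc_eq_neg_23 hf.2.1 hf.1 with h | h | h
    · exact Or.inl (gamma0Equiv_of_properlyEquiv hf q₁ (h.trans h₁))
    · exact Or.inr (Or.inl (gamma0Equiv_of_properlyEquiv hf q₂ (h.trans h₂)))
    · exact Or.inr (Or.inr (gamma0Equiv_of_properlyEquiv hf q₃ (h.trans h₃)))
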